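/- Let p be an odd prime and let a ≥ 1 and n ≥ 0 be integers. Then the quotient ring ℤ_p⟦T⟧ / (T + p^a, (1+T)^{p^n} − 1) is isomorphic, as a ring, to ℤ/p^{a+n}ℤ. -/

import Mathlib

open PowerSeries

/-! Substituting `T = t := -p^a` kills `T + p^a`. Without a topology this substitution is not
available into `ℤ_p`, but it is into `ℤ/p^M`, where `t` is nilpotent and only a truncation of
the series matters; its kernel is `(T - t) + (p^M)`. Modulo `T - t` the generator
`(1+T)^{p^n} - 1` becomes the constant `(1 - p^a)^{p^n} - 1`, which by lifting the exponent is
`p^{a+n}` times a `p`-adic unit, so for `M = a + n` the two ideals coincide. -/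

namespace PowerSeries

variable {R S : Type*} [CommRing R] [CommRing S]

theorem X_pow_dvd_sub_trunc (N : ℕ) (f : R⟦X⟧) : X ^ N ∣ f - (trunc N f : R⟦X⟧) :=
  ⟨_, sub_eq_of_eq_add (eq_X_pow_mul_shift_add_trunc N f)⟩

theorem X_sub_C_dvd_sub_C_eval (t : R) (Q : Polynomial R) :
    X - C t ∣ (Q : R⟦X⟧) - C (Q.eval t) := by
  simpa using map_dvd Polynomial.coeToPowerSeries.ringHom
    (Polynomial.X_sub_C_dvd_sub_C_eval (a := t) (p := Q))

theorem sub_C_eval_trunc_mem {I : Ideal R⟦X⟧} {t : R} {N : ℕ} (hXt : X - C t ∈ I)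
    (htN : C (t ^ N) ∈ I) (f : R⟦X⟧) : f - C ((trunc N f).eval t) ∈ I := by
  have hXN : X ^ N ∈ I := by
    have h := I.mem_of_dvd (sub_dvd_pow_sub_pow X (C t) N) hXt
    simpa using I.add_mem h htN
  have hsplit : f - C ((trunc N f).eval t)
      = (f - (trunc N f : R⟦X⟧)) + ((trunc N f : R⟦X⟧) - C ((trunc N f).eval t)) := by ring
  rw [hsplit]
  exact I.add_mem (I.mem_of_dvd (X_pow_dvd_sub_trunc N f) hXN)
    (I.mem_of_dvd (X_sub_C_dvd_sub_C_eval t _) hXt)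

section EvalOfPowEqZero

variable (σ : R →+* S) {c : S} {N : ℕ}

theorem eval₂_trunc_coe_of_pow_eq_zero (hc : c ^ N = 0) (Q : Polynomial R) :
    (trunc N (Q : R⟦X⟧)).eval₂ σ c = Q.eval₂ σ c := by
  obtain ⟨H, hH⟩ : (Polynomial.X : Polynomial R) ^ N ∣ Q - trunc N (Q : R⟦X⟧) := by
    rw [Polynomial.X_pow_dvd_iff]
    intro d hd
    simp [coeff_trunc, hd, Polynomial.coeff_coe]
  have h := congrArg (Polynomial.eval₂ σ c) hH
  rw [Polynomial.eval₂_sub, Polynomial.eval₂_mul, Polynomial.eval₂_X_pow, hc, zero_mul,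
    sub_eq_zero] at h
  exact h.symm

noncomputable def eval₂OfPowEqZero (hc : c ^ N = 0) : R⟦X⟧ →+* S where
  toFun f := (trunc N f).eval₂ σ c
  map_one' := by
    cases N with
    | zero =>
      have : Subsingleton S := subsingleton_of_zero_eq_one (by simpa using hc.symm)
      exact Subsingleton.elim _ _
    | succ m => simp [trunc_one]
  map_mul' f g := by
    rw [← trunc_trunc_mul_trunc, ← Polynomial.coe_mul, eval₂_trunc_coe_of_pow_eq_zero σ hc,
      Polynomial.eval₂_mul]
  map_zero' := by simp
  map_add' f g := by simp [Polynomial.eval₂_add]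

variable (hc : c ^ N = 0)

theorem eval₂OfPowEqZero_coe (Q : Polynomial R) :
    eval₂OfPowEqZero σ hc (Q : R⟦X⟧) = Q.eval₂ σ c :=
  eval₂_trunc_coe_of_pow_eq_zero σ hc Q

@[simp]
theorem eval₂OfPowEqZero_C (r : R) : eval₂OfPowEqZero σ hc (C r) = σ r := by
  simpa using eval₂OfPowEqZero_coe σ hc (Polynomial.C r)

@[simp]
theorem eval₂OfPowEqZero_X : eval₂OfPowEqZero σ hc X = c := by
  simpa using eval₂OfPowEqZero_coe σ hc Polynomial.X

theorem eval₂OfPowEqZero_surjective (hσ : Function.Surjective σ) :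
    Function.Surjective (eval₂OfPowEqZero σ hc) := fun s => by
  obtain ⟨r, rfl⟩ := hσ s
  exact ⟨C r, eval₂OfPowEqZero_C σ hc r⟩

end EvalOfPowEqZero

variable (σ : R →+* S) {t : R} {N : ℕ}

theorem ker_eval₂OfPowEqZero (hc : σ t ^ N = 0) :
    RingHom.ker (eval₂OfPowEqZero σ hc) = Ideal.span {X - C t} ⊔ (RingHom.ker σ).map C := by
  set I := Ideal.span {X - C t} ⊔ (RingHom.ker σ).map C
  have hXt : X - C t ∈ I := Ideal.mem_sup_left (Ideal.subset_span rfl)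
  have hC {r : R} (hr : σ r = 0) : C r ∈ I := Ideal.mem_sup_right (Ideal.mem_map_of_mem _ hr)
  have hIker : I ≤ RingHom.ker (eval₂OfPowEqZero σ hc) := by
    refine sup_le ?_ (Ideal.map_le_iff_le_comap.mpr fun r hr => ?_)
    · rw [Ideal.span_le, Set.singleton_subset_iff]
      simp
    · simpa using hr
  refine le_antisymm (fun f hf => ?_) hIker
  have hfr := sub_C_eval_trunc_mem hXt (hC (by rw [map_pow, hc])) f
  have hr : σ ((trunc N f).eval t) = 0 := by
    have h := hIker hfr
    rw [RingHom.mem_ker, map_sub, RingHom.mem_ker.mp hf, eval₂OfPowEqZero_C] at h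
    simpa using h
  simpa using I.add_mem hfr (hC hr)

noncomputable def quotientSpanXSubCSupEquiv (hσ : Function.Surjective σ) (hc : σ t ^ N = 0) :
    R⟦X⟧ ⧸ (Ideal.span {X - C t} ⊔ (RingHom.ker σ).map C) ≃+* S :=
  (Ideal.quotEquivOfEq (ker_eval₂OfPowEqZero σ hc).symm).trans
    (RingHom.quotientKerEquivOfSurjective (eval₂OfPowEqZero_surjective σ hc hσ))

end PowerSeries

theorem emultiplicity_one_add_pow_prime_pow_sub_one {R : Type*} [CommRing R] [IsDomain R]
    {p : ℕ} (hp : Prime (p : R)) (hodd : Odd p) {t : R} (ht : (p : R) ∣ t) (n : ℕ) :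
    emultiplicity (p : R) ((1 + t) ^ p ^ n - 1) = emultiplicity (p : R) t + n := by
  have hunit : ¬ (p : R) ∣ 1 + t :=
    fun h => hp.not_isUnit (isUnit_of_dvd_one ((dvd_add_left ht).mp h))
  simpa using emultiplicity_pow_prime_pow_sub_pow_prime_pow hp hodd (y := 1) (by simpa using ht)
    hunit n

theorem PadicInt.associated_pow_of_emultiplicity_eq {p : ℕ} [Fact p.Prime] {x : ℤ_[p]} {m : ℕ}
    (h : emultiplicity (p : ℤ_[p]) x = m) : Associated ((p : ℤ_[p]) ^ m) x := by
  obtain ⟨⟨u, rfl⟩, hmax⟩ := emultiplicity_eq_coe.mp h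
  have hu : IsUnit u := by
    by_contra hu
    rw [not_isUnit_iff, norm_lt_one_iff_dvd] at hu
    exact hmax (pow_succ (p : ℤ_[p]) m ▸ mul_dvd_mul_left _ hu)
  exact ⟨hu.unit, rfl⟩

/-- For an odd prime `p` and integers `a ≥ 1`, `n ≥ 0`, the quotient ring
`ℤ_p⟦T⟧ / (T + p^a, (1+T)^{p^n} − 1)` is isomorphic, as a ring, to `ℤ/p^{a+n}ℤ`. -/
theorem quotient_span_ringEquiv_zmod
    (p : ℕ) [Fact p.Prime] (hodd : Odd p) (a n : ℕ) (ha : 1 ≤ a) :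
    Nonempty
      ((PowerSeries ℤ_[p] ⧸ Ideal.span
          {(X : PowerSeries ℤ_[p]) + ((p : ℕ) : PowerSeries ℤ_[p]) ^ a,
            (1 + X : PowerSeries ℤ_[p]) ^ (p ^ n) - 1}) ≃+*
        ZMod (p ^ (a + n))) := by
  set t : ℤ_[p] := -(p : ℤ_[p]) ^ a
  have hpt : (p : ℤ_[p]) ∣ t := (dvd_pow_self _ (by omega)).neg_right
  have hassoc : Associated ((p : ℤ_[p]) ^ (a + n)) ((1 + t) ^ p ^ n - 1) := by
    refine PadicInt.associated_pow_of_emultiplicity_eq ?_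
    rw [emultiplicity_one_add_pow_prime_pow_sub_one PadicInt.prime_p hodd hpt, emultiplicity_neg,
      emultiplicity_pow_self_of_prime PadicInt.prime_p]
    norm_cast
  have hideal :
      Ideal.span {(X : ℤ_[p]⟦X⟧) + ((p : ℕ) : ℤ_[p]⟦X⟧) ^ a, (1 + X) ^ (p ^ n) - 1}
        = Ideal.span {X - C t} ⊔ (RingHom.ker (PadicInt.toZModPow (a + n))).map C := by
    have hX : (X : ℤ_[p]⟦X⟧) + ((p : ℕ) : ℤ_[p]⟦X⟧) ^ a = X - C t := by simp [t]
    obtain ⟨w, hw⟩ :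
        X - C t ∣ ((1 + X : ℤ_[p]⟦X⟧) ^ p ^ n - 1) - C ((1 + t) ^ p ^ n - 1) := by
      convert sub_dvd_pow_sub_pow (1 + X) (1 + C t) (p ^ n) using 1 <;> simp
    rw [hX, eq_add_of_sub_eq' hw, Ideal.span_pair_add_left_mul, PadicInt.ker_toZModPow,
      Ideal.map_span, Set.image_singleton, Ideal.span_insert,
      Ideal.span_singleton_eq_span_singleton.mpr (hassoc.map C)]
  have hc : PadicInt.toZModPow (a + n) t ^ (a + n) = 0 := by
    rw [← map_pow, ← RingHom.mem_ker, PadicInt.ker_toZModPow, Ideal.mem_span_singleton]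
    exact pow_dvd_pow_of_dvd hpt _
  exact ⟨(Ideal.quotEquivOfEq hideal).trans
    (quotientSpanXSubCSupEquiv _ (ZMod.ringHom_surjective _) hc)⟩
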